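/- arXiv:2511.01152 — 5 statements merged into one kernel-verified Lean document; each statement's English description precedes it below -/
import Mathlib

section
/- Let 0 < α ≤ 1/2, let f be analytic on the unit disk with ‖f‖ := sup_{z∈𝔻}(1-|z|²)^α|f(z)| < ∞, and for t ≥ 0 define S_t f(z) = w_t(z) f(φ_t(z)) where w_t(z) = e^{-t}/(1-(1-e^{-t})z) and φ_t(z) = e^{-t}z/(1-(1-e^{-t})z). Then sup_{z∈𝔻}(1-|z|²)^α|S_t f(z)| ≤ e^{-αt} ‖f‖. -/
/-!
Write `s = e^{-t} ∈ (0, 1]`, `D = 1 - (1 - s) z`, `w = s / D` and `φ = s z / D = w z`. The identity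
`|D|² = s (1 - |z|²) + s² |z|² + (1 - s) |1 - z|²` gives both `|w| ≤ 1` and the Schwarz–Pick
inequality `(1 - |z|²) |w|² ≤ s (1 - |φ|²)` (note `w² = s φ'`). Since `2α ≤ 1` and `|w| ≤ 1`,
`|w| ≤ |w|^{2α}`, so `(1 - |z|²)^α |w| ≤ ((1 - |z|²) |w|²)^α ≤ s^α (1 - |φ|²)^α`.
-/

-- The weight `w_t` and the self-map `φ_t` of the Cesàro semigroup, parametrised by `s = e^{-t}`.
noncomputable def cesaroWeight (s : ℝ) (z : ℂ) : ℂ := s / (1 - (1 - s) * z)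

noncomputable def cesaroMap (s : ℝ) (z : ℂ) : ℂ := s * z / (1 - (1 - s) * z)

lemma cesaroMap_eq_cesaroWeight_mul (s : ℝ) (z : ℂ) :
    cesaroMap s z = cesaroWeight s z * z :=
  mul_div_right_comm _ _ _

lemma norm_one_sub_mul_sq (s : ℝ) (z : ℂ) :
    ‖1 - (1 - s) * z‖ ^ 2 = s * (1 - ‖z‖ ^ 2) + s ^ 2 * ‖z‖ ^ 2 + (1 - s) * ‖1 - z‖ ^ 2 := by
  simp only [Complex.sq_norm, Complex.normSq_apply, Complex.sub_re, Complex.sub_im,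
    Complex.mul_re, Complex.mul_im, Complex.one_re, Complex.one_im, Complex.ofReal_re,
    Complex.ofReal_im]
  ring

section

variable {s : ℝ} {z : ℂ}

lemma le_norm_one_sub_mul (hs : s ≤ 1) (hz : ‖z‖ ≤ 1) : s ≤ ‖1 - (1 - s) * z‖ := by
  have h1s : ‖(1 : ℂ) - s‖ = 1 - s := by
    rw [← Complex.ofReal_one, ← Complex.ofReal_sub, Complex.norm_real, Real.norm_of_nonneg]
    linarith
  calc s ≤ 1 - (1 - s) * ‖z‖ := by nlinarith
    _ = ‖(1 : ℂ)‖ - ‖(1 - s) * z‖ := by rw [norm_mul, h1s, norm_one]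
    _ ≤ ‖1 - (1 - s) * z‖ := norm_sub_norm_le _ _

lemma norm_cesaroWeight_le_one (hs0 : 0 < s) (hs1 : s ≤ 1) (hz : ‖z‖ ≤ 1) :
    ‖cesaroWeight s z‖ ≤ 1 := by
  have hD := le_norm_one_sub_mul hs1 hz
  rw [cesaroWeight, norm_div, Complex.norm_real, Real.norm_of_nonneg hs0.le]
  exact div_le_one_of_le₀ hD (norm_nonneg _)

lemma norm_cesaroMap_le (hs0 : 0 < s) (hs1 : s ≤ 1) (hz : ‖z‖ ≤ 1) :
    ‖cesaroMap s z‖ ≤ ‖z‖ := by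
  rw [cesaroMap_eq_cesaroWeight_mul, norm_mul]
  exact mul_le_of_le_one_left (norm_nonneg z) (norm_cesaroWeight_le_one hs0 hs1 hz)

lemma cesaro_schwarzPick (hs0 : 0 ≤ s) (hs1 : s ≤ 1) :
    (1 - ‖z‖ ^ 2) * ‖cesaroWeight s z‖ ^ 2 ≤ s * (1 - ‖cesaroMap s z‖ ^ 2) := by
  set D : ℂ := 1 - (1 - s) * z
  have hw : ‖cesaroWeight s z‖ = s / ‖D‖ := by
    rw [cesaroWeight, norm_div, Complex.norm_real, Real.norm_of_nonneg hs0]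
  rw [cesaroMap_eq_cesaroWeight_mul, norm_mul, hw]
  rcases eq_or_ne ‖D‖ 0 with hD | hD
  · simp only [hD, div_zero]
    nlinarith
  have hD2 : 0 < ‖D‖ ^ 2 := by positivity
  have hDsq := norm_one_sub_mul_sq s z
  have h1z : 0 ≤ (1 - s) * ‖1 - z‖ ^ 2 := mul_nonneg (by linarith) (sq_nonneg _)
  rw [div_pow, mul_pow, div_pow]
  field_simp
  nlinarith [mul_nonneg hs0 h1z]

end

theorem weighted_norm_cesaroWeight_mul_le {α s : ℝ} (hα : 0 ≤ α) (hα2 : α ≤ 1 / 2)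
    (hs0 : 0 < s) (hs1 : s ≤ 1) {z : ℂ} (hz : ‖z‖ ≤ 1) (a : ℂ) :
    (1 - ‖z‖ ^ 2) ^ α * ‖cesaroWeight s z * a‖ ≤
      s ^ α * ((1 - ‖cesaroMap s z‖ ^ 2) ^ α * ‖a‖) := by
  set w := ‖cesaroWeight s z‖
  have hw0 : 0 ≤ w := norm_nonneg _
  have h1z : 0 ≤ 1 - ‖z‖ ^ 2 := by nlinarith [norm_nonneg z]
  have h1φ : 0 ≤ 1 - ‖cesaroMap s z‖ ^ 2 := by
    nlinarith [norm_cesaroMap_le hs0 hs1 hz, norm_nonneg (cesaroMap s z)]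
  have hw : w ≤ (w ^ 2) ^ α := by
    rw [← Real.rpow_two, ← Real.rpow_mul hw0]
    exact Real.self_le_rpow_of_le_one hw0 (norm_cesaroWeight_le_one hs0 hs1 hz) (by linarith)
  rw [norm_mul]
  calc (1 - ‖z‖ ^ 2) ^ α * (w * ‖a‖) ≤ (1 - ‖z‖ ^ 2) ^ α * ((w ^ 2) ^ α * ‖a‖) := by gcongr
    _ = ((1 - ‖z‖ ^ 2) * w ^ 2) ^ α * ‖a‖ := by rw [Real.mul_rpow h1z (by positivity)]; ring
    _ ≤ (s * (1 - ‖cesaroMap s z‖ ^ 2)) ^ α * ‖a‖ := by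
      gcongr ?_ ^ α * _
      exact cesaro_schwarzPick hs0.le hs1
    _ = s ^ α * ((1 - ‖cesaroMap s z‖ ^ 2) ^ α * ‖a‖) := by rw [Real.mul_rpow hs0.le h1φ]; ring

theorem cesaro_stmt_8_general (α : ℝ) (hα : 0 < α) (hα2 : α ≤ 1 / 2)
    (f : ℂ → ℂ)
    (hbdd : BddAbove {y : ℝ | ∃ z : ℂ, ‖z‖ < 1 ∧ y = (1 - ‖z‖ ^ 2) ^ α * ‖f z‖})
    (t : ℝ) (ht : 0 ≤ t) (z : ℂ) (hz : ‖z‖ < 1) :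
    (1 - ‖z‖ ^ 2) ^ α *
        ‖(Real.exp (-t) : ℂ) / (1 - (1 - (Real.exp (-t) : ℂ)) * z) *
          f ((Real.exp (-t) : ℂ) * z / (1 - (1 - (Real.exp (-t) : ℂ)) * z))‖ ≤
      Real.exp (-α * t) *
        sSup {y : ℝ | ∃ w : ℂ, ‖w‖ < 1 ∧ y = (1 - ‖w‖ ^ 2) ^ α * ‖f w‖} := by
  set s := Real.exp (-t)
  have hs0 : 0 < s := Real.exp_pos _
  have hs1 : s ≤ 1 := Real.exp_le_one_iff.mpr (by linarith)
  have hφ : ‖cesaroMap s z‖ < 1 := (norm_cesaroMap_le hs0 hs1 hz.le).trans_lt hz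
  have hexp : Real.exp (-α * t) = s ^ α := by
    rw [← Real.exp_mul]
    ring_nf
  calc (1 - ‖z‖ ^ 2) ^ α * ‖cesaroWeight s z * f (cesaroMap s z)‖
      ≤ s ^ α * ((1 - ‖cesaroMap s z‖ ^ 2) ^ α * ‖f (cesaroMap s z)‖) :=
        weighted_norm_cesaroWeight_mul_le hα.le hα2 hs0 hs1 hz.le _
    _ ≤ Real.exp (-α * t) *
        sSup {y : ℝ | ∃ w : ℂ, ‖w‖ < 1 ∧ y = (1 - ‖w‖ ^ 2) ^ α * ‖f w‖} := by
      rw [hexp]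
      gcongr
      exact le_csSup hbdd ⟨_, hφ, rfl⟩

theorem cesaro_stmt_8 (α : ℝ) (hα : 0 < α) (hα2 : α ≤ 1 / 2)
    (f : ℂ → ℂ) (hf : DifferentiableOn ℂ f (Metric.ball 0 1))
    (hbdd : BddAbove {y : ℝ | ∃ z : ℂ, ‖z‖ < 1 ∧ y = (1 - ‖z‖ ^ 2) ^ α * ‖f z‖})
    (t : ℝ) (ht : 0 ≤ t) (z : ℂ) (hz : ‖z‖ < 1) :
    (1 - ‖z‖ ^ 2) ^ α *
        ‖(Real.exp (-t) : ℂ) / (1 - (1 - (Real.exp (-t) : ℂ)) * z) *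
          f ((Real.exp (-t) : ℂ) * z / (1 - (1 - (Real.exp (-t) : ℂ)) * z))‖ ≤
      Real.exp (-α * t) *
        sSup {y : ℝ | ∃ w : ℂ, ‖w‖ < 1 ∧ y = (1 - ‖w‖ ^ 2) ^ α * ‖f w‖} :=
  cesaro_stmt_8_general α hα hα2 f hbdd t ht z hz
end

section
/- For 0 < α ≤ 1/2, the Cesàro operator 𝒞f(z) = (1/z)∫₀^z f(ξ)/(1-ξ) dξ is bounded on the Korenblum space H^∞_α = {f analytic on 𝔻 : sup_{z∈𝔻}(1-|z|²)^α|f(z)| < ∞}, and its operator norm equals 1/α. -/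
/-!
If `(1 - |w|²)^α |f(w)| ≤ M` on the disc, then `|𝒞f(z)| ≤ M ∫₀¹ k(t|z|) dt` with
`k(x) = 1 / ((1 - x²)^α (1 - x))`. For `α ≤ 1/2`, `α k(tr)` is bounded by the `t`-derivative of
`t (1 - t²r²)^(-α)`, so `∫₀¹ k(tr) dt ≤ (1 - r²)^(-α) / α` and `‖𝒞f‖ ≤ ‖f‖ / α`.
The test function `f(w) = (1 - w)^(-α)` has norm at most `2^α`, and on `(0, 1)`
`(1 - r²)^α 𝒞f(r) = ((1 + r)^α - (1 - r²)^α) / (αr)`, which tends to `2^α / α` as `r → 1⁻`.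
-/

/-- The Cesàro operator `𝒞f(z) = ∫₀¹ f(tz)/(1-tz) dt`. -/
noncomputable def cesaro (f : ℂ → ℂ) (z : ℂ) : ℂ :=
  ∫ t in (0 : ℝ)..1, f ((t : ℂ) * z) / (1 - (t : ℂ) * z)

/-- The Korenblum space `H^∞_α` norm: `sup_{z ∈ 𝔻} (1-|z|²)^α |f(z)|`. -/
noncomputable def korenblumNorm (α : ℝ) (f : ℂ → ℂ) : ℝ :=
  sSup {y : ℝ | ∃ z : ℂ, ‖z‖ < 1 ∧ y = (1 - ‖z‖ ^ 2) ^ α * ‖f z‖}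

open Set Filter Topology intervalIntegral

noncomputable def cesaroKernel (α x : ℝ) : ℝ := ((1 - x ^ 2) ^ α * (1 - x))⁻¹

section CesaroKernel

variable {α r : ℝ}

lemma continuousOn_cesaroKernel : ContinuousOn (cesaroKernel α) (Ioo (-1) 1) := by
  intro x hx
  have h1 : 0 < 1 - x := by linarith [hx.2]
  have h2 : 0 < 1 - x ^ 2 := by nlinarith [hx.1, hx.2]
  refine ContinuousAt.continuousWithinAt ?_
  unfold cesaroKernel
  exact ((((continuousAt_const.sub (continuousAt_id.pow 2)).rpow_const (Or.inl h2.ne')).mul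
    (continuousAt_const.sub continuousAt_id)).inv₀ (mul_pos (Real.rpow_pos_of_pos h2 α) h1).ne')

lemma mem_Ioo_mul_of_mem_Icc {t : ℝ} (ht : t ∈ Icc (0 : ℝ) 1) (hr0 : 0 ≤ r) (hr1 : r < 1) :
    t * r ∈ Ioo (-1) 1 :=
  ⟨by nlinarith [ht.1], by nlinarith [ht.2]⟩

lemma integrableOn_cesaroKernel_mul (hr0 : 0 ≤ r) (hr1 : r < 1) :
    MeasureTheory.IntegrableOn (fun t => cesaroKernel α (t * r)) (Icc 0 1) :=
  (continuousOn_cesaroKernel.comp (continuousOn_id.mul continuousOn_const)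
    fun _ ht => mem_Ioo_mul_of_mem_Icc ht hr0 hr1).integrableOn_Icc

lemma hasDerivAt_mul_one_sub_sq_rpow_neg {t : ℝ} (ht : 1 - (t * r) ^ 2 ≠ 0) :
    HasDerivAt (fun t => t * (1 - (t * r) ^ 2) ^ (-α))
      ((1 - (t * r) ^ 2) ^ (-α) + 2 * α * (t * r) ^ 2 * (1 - (t * r) ^ 2) ^ (-α - 1)) t := by
  have hbase : HasDerivAt (fun t : ℝ => 1 - (t * r) ^ 2) (-(2 * (t * r) * r)) t := by
    simpa using (((hasDerivAt_id t).mul_const r).pow 2).const_sub 1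
  refine ((hasDerivAt_id' t).fun_mul (hbase.rpow_const (p := -α) (Or.inl ht))).congr_deriv ?_
  ring

-- The right-hand side is `d/dt [t (1 - (tr)²)^(-α)]` at `x = tr`.
lemma mul_cesaroKernel_le (hα2 : α ≤ 1 / 2) {x : ℝ} (hx0 : 0 ≤ x) (hx1 : x < 1) :
    α * cesaroKernel α x ≤
      (1 - x ^ 2) ^ (-α) + 2 * α * x ^ 2 * (1 - x ^ 2) ^ (-α - 1) := by
  have h1 : 0 < 1 - x := by linarith
  have h2 : 0 < 1 - x ^ 2 := by nlinarith
  -- `α (1 + x) ≤ 1 - x² + 2αx²` is `(1 - x)((1 - α) + (1 - 2α)x) ≥ 0`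
  have key : α * (1 + x) ≤ 1 - x ^ 2 + 2 * α * x ^ 2 := by
    nlinarith [mul_nonneg h1.le (by nlinarith : (0 : ℝ) ≤ (1 - α) + (1 - 2 * α) * x)]
  rw [cesaroKernel, Real.rpow_sub h2, Real.rpow_one, Real.rpow_neg h2.le]
  field_simp
  nlinarith [mul_le_mul_of_nonneg_right key h1.le]

lemma integral_cesaroKernel_mul_le (hα : 0 < α) (hα2 : α ≤ 1 / 2) (hr0 : 0 ≤ r) (hr1 : r < 1) :
    ∫ t in (0 : ℝ)..1, cesaroKernel α (t * r) ≤ 1 / α * ((1 - r ^ 2) ^ α)⁻¹ := by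
  have hsq : ∀ t ∈ Icc (0 : ℝ) 1, 1 - (t * r) ^ 2 ≠ 0 := fun t ht => by
    have := mem_Ioo_mul_of_mem_Icc ht hr0 hr1
    nlinarith [this.1, this.2]
  have hderiv := fun t ht => hasDerivAt_mul_one_sub_sq_rpow_neg (α := α) (hsq t ht)
  have hFTC := integral_le_sub_of_hasDeriv_right_of_le zero_le_one
    (fun t ht => (hderiv t ht).continuousAt.continuousWithinAt)
    (fun t ht => (hderiv t (Ioo_subset_Icc_self ht)).hasDerivWithinAt)
    ((integrableOn_cesaroKernel_mul hr0 hr1).const_mul α)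
    (fun t ht => mul_cesaroKernel_le hα2 (mul_nonneg ht.1.le hr0) (by nlinarith [ht.2]))
  rw [integral_const_mul] at hFTC
  calc ∫ t in (0 : ℝ)..1, cesaroKernel α (t * r)
      = 1 / α * (α * ∫ t in (0 : ℝ)..1, cesaroKernel α (t * r)) := by
        rw [one_div, inv_mul_cancel_left₀ hα.ne']
    _ ≤ 1 / α * ((1 - r ^ 2) ^ α)⁻¹ := by
      gcongr
      simpa [Real.rpow_neg (by nlinarith : (0 : ℝ) ≤ 1 - r ^ 2)] using hFTC

end CesaroKernel

section KorenblumNorm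

variable {α M : ℝ} {f : ℂ → ℂ}

lemma one_sub_norm_sq_pos {z : ℂ} (hz : ‖z‖ < 1) : 0 < 1 - ‖z‖ ^ 2 := by
  nlinarith [norm_nonneg z]

lemma le_korenblumNorm
    (hf : BddAbove {y : ℝ | ∃ z : ℂ, ‖z‖ < 1 ∧ y = (1 - ‖z‖ ^ 2) ^ α * ‖f z‖})
    {z : ℂ} (hz : ‖z‖ < 1) : (1 - ‖z‖ ^ 2) ^ α * ‖f z‖ ≤ korenblumNorm α f :=
  le_csSup hf ⟨z, hz, rfl⟩

lemma korenblumNorm_nonneg : 0 ≤ korenblumNorm α f :=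
  Real.sSup_nonneg <| by
    rintro _ ⟨z, hz, rfl⟩
    exact mul_nonneg (Real.rpow_nonneg (one_sub_norm_sq_pos hz).le α) (norm_nonneg _)

lemma bddAbove_and_korenblumNorm_le
    (h : ∀ z : ℂ, ‖z‖ < 1 → (1 - ‖z‖ ^ 2) ^ α * ‖f z‖ ≤ M) :
    BddAbove {y : ℝ | ∃ z : ℂ, ‖z‖ < 1 ∧ y = (1 - ‖z‖ ^ 2) ^ α * ‖f z‖} ∧
      korenblumNorm α f ≤ M := by
  have hM : ∀ y ∈ {y : ℝ | ∃ z : ℂ, ‖z‖ < 1 ∧ y = (1 - ‖z‖ ^ 2) ^ α * ‖f z‖}, y ≤ M := by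
    rintro _ ⟨z, hz, rfl⟩
    exact h z hz
  exact ⟨⟨M, hM⟩, csSup_le ⟨_, 0, by simp, rfl⟩ hM⟩

end KorenblumNorm

section CesaroBound

variable {α M : ℝ} {f : ℂ → ℂ} {z : ℂ}

lemma norm_cesaro_integrand_le
    (hf : ∀ w : ℂ, ‖w‖ < 1 → (1 - ‖w‖ ^ 2) ^ α * ‖f w‖ ≤ M) (hz : ‖z‖ < 1)
    {t : ℝ} (ht : t ∈ Icc (0 : ℝ) 1) :
    ‖f (t * z) / (1 - t * z)‖ ≤ M * cesaroKernel α (t * ‖z‖) := by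
  have hnorm : ‖(t : ℂ) * z‖ = t * ‖z‖ := by
    rw [norm_mul, Complex.norm_real, Real.norm_of_nonneg ht.1]
  have htz := mem_Ioo_mul_of_mem_Icc ht (norm_nonneg z) hz
  have h1 : 0 < 1 - t * ‖z‖ := by linarith [htz.2]
  have hpow : 0 < (1 - (t * ‖z‖) ^ 2) ^ α := Real.rpow_pos_of_pos (by nlinarith [htz.1, htz.2]) α
  have hden : 1 - t * ‖z‖ ≤ ‖1 - (t : ℂ) * z‖ := by
    have := norm_sub_norm_le (1 : ℂ) (t * z)
    rwa [norm_one, hnorm] at this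
  have hfw : (1 - (t * ‖z‖) ^ 2) ^ α * ‖f (t * z)‖ ≤ M := by
    have := hf (t * z) (by rw [hnorm]; exact htz.2)
    rwa [hnorm] at this
  have hM : 0 ≤ M := (mul_nonneg hpow.le (norm_nonneg _)).trans hfw
  rw [norm_div, cesaroKernel, mul_inv, ← mul_assoc, ← div_eq_mul_inv, ← div_eq_mul_inv]
  exact div_le_div₀ (div_nonneg hM hpow.le) (by rwa [le_div_iff₀ hpow, mul_comm]) h1 hden

lemma weighted_norm_cesaro_le (hα : 0 < α) (hα2 : α ≤ 1 / 2)
    (hf : ∀ w : ℂ, ‖w‖ < 1 → (1 - ‖w‖ ^ 2) ^ α * ‖f w‖ ≤ M) (hz : ‖z‖ < 1) :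
    (1 - ‖z‖ ^ 2) ^ α * ‖cesaro f z‖ ≤ 1 / α * M := by
  have hM : 0 ≤ M := (norm_nonneg _).trans (by simpa using hf 0 (by simp))
  have hpow : 0 < (1 - ‖z‖ ^ 2) ^ α := Real.rpow_pos_of_pos (one_sub_norm_sq_pos hz) α
  have hcesaro : ‖cesaro f z‖ ≤ M * ∫ t in (0 : ℝ)..1, cesaroKernel α (t * ‖z‖) := by
    rw [← integral_const_mul]
    refine norm_integral_le_of_norm_le zero_le_one (.of_forall fun t ht => ?_) ?_
    · exact norm_cesaro_integrand_le hf hz (Ioc_subset_Icc_self ht)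
    · exact (intervalIntegrable_iff_integrableOn_Icc_of_le zero_le_one).2
        ((integrableOn_cesaroKernel_mul (norm_nonneg z) hz).const_mul M)
  calc (1 - ‖z‖ ^ 2) ^ α * ‖cesaro f z‖
      ≤ (1 - ‖z‖ ^ 2) ^ α * (M * (1 / α * ((1 - ‖z‖ ^ 2) ^ α)⁻¹)) := by
        gcongr
        exact hcesaro.trans
          (by gcongr; exact integral_cesaroKernel_mul_le hα hα2 (norm_nonneg z) hz)
    _ = 1 / α * M := by field_simp

end CesaroBound

section TestFunction

variable {α r : ℝ}

lemma differentiableOn_one_sub_cpow (s : ℂ) :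
    DifferentiableOn ℂ (fun w : ℂ => (1 - w) ^ s) (Metric.ball 0 1) := by
  intro w hw
  have hre : 0 < (1 - w).re := by
    have := (Complex.abs_re_le_norm w).trans_lt (mem_ball_zero_iff.1 hw)
    simp only [Complex.sub_re, Complex.one_re]
    linarith [(abs_lt.1 this).2]
  exact ((differentiableAt_const 1).sub differentiableAt_id).cpow_const
    (Complex.mem_slitPlane_iff.2 (Or.inl hre)) |>.differentiableWithinAt

lemma weighted_norm_one_sub_cpow_neg_le (hα : 0 ≤ α) {z : ℂ} (hz : ‖z‖ < 1) :
    (1 - ‖z‖ ^ 2) ^ α * ‖(1 - z) ^ (-(α : ℂ))‖ ≤ 2 ^ α := by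
  have hden : 1 - ‖z‖ ≤ ‖1 - z‖ := by
    have := norm_sub_norm_le (1 : ℂ) z
    rwa [norm_one] at this
  have hden0 : 0 < ‖1 - z‖ := by linarith
  have hratio : (1 - ‖z‖ ^ 2) / ‖1 - z‖ ≤ 2 := by
    rw [div_le_iff₀ hden0]
    nlinarith [norm_nonneg z]
  rw [← Complex.ofReal_neg, Complex.norm_cpow_real, Real.rpow_neg hden0.le, ← div_eq_mul_inv,
    ← Real.div_rpow (one_sub_norm_sq_pos hz).le hden0.le]
  exact Real.rpow_le_rpow (div_nonneg (one_sub_norm_sq_pos hz).le hden0.le) hratio hα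

lemma cesaro_one_sub_cpow_neg_ofReal (hα : α ≠ 0) (hr0 : r ≠ 0) (hr1 : r < 1) :
    cesaro (fun w : ℂ => (1 - w) ^ (-(α : ℂ))) r = (((1 - r) ^ (-α) - 1) / (α * r) : ℝ) := by
  have hpos : ∀ t ∈ uIcc (0 : ℝ) 1, 0 < 1 - t * r := by
    intro t ht
    rw [uIcc_of_le zero_le_one] at ht
    rcases le_or_gt r 0 with hr | hr <;> nlinarith [ht.1, ht.2]
  have hintegrand : EqOn (fun t : ℝ => (1 - (t : ℂ) * r) ^ (-(α : ℂ)) / (1 - (t : ℂ) * r))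
      (fun t : ℝ => (((1 - t * r) ^ (-α - 1) : ℝ) : ℂ)) (uIcc 0 1) := by
    intro t ht
    have hc : (1 : ℂ) - t * r = ((1 - t * r : ℝ) : ℂ) := by push_cast; ring
    simp only [hc, ← Complex.ofReal_neg, ← Complex.ofReal_cpow (hpos t ht).le, ← Complex.ofReal_div,
      Real.rpow_sub (hpos t ht), Real.rpow_one]
  have hderiv : ∀ t ∈ uIcc (0 : ℝ) 1,
      HasDerivAt (fun t : ℝ => (1 - t * r) ^ (-α) / (α * r)) ((1 - t * r) ^ (-α - 1)) t := by
    intro t ht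
    have hbase : HasDerivAt (fun t : ℝ => 1 - t * r) (-r) t := by
      simpa using ((hasDerivAt_id t).mul_const r).const_sub 1
    refine ((hbase.rpow_const (p := -α) (Or.inl (hpos t ht).ne')).div_const (α * r)).congr_deriv ?_
    field_simp
  have hint : IntervalIntegrable (fun t : ℝ => (1 - t * r) ^ (-α - 1)) MeasureTheory.volume 0 1 :=
    ContinuousOn.intervalIntegrable fun t ht =>
      ((continuousAt_const.sub (continuousAt_id.mul continuousAt_const)).rpow_const
        (Or.inl (hpos t ht).ne')).continuousWithinAt
  rw [cesaro, integral_congr hintegrand, intervalIntegral.integral_ofReal,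
    integral_eq_sub_of_hasDerivAt hderiv hint]
  norm_num
  ring

lemma weighted_norm_cesaro_one_sub_cpow_neg (hα : 0 < α) (hr : r ∈ Ioo (0 : ℝ) 1) :
    (1 - ‖(r : ℂ)‖ ^ 2) ^ α * ‖cesaro (fun w : ℂ => (1 - w) ^ (-(α : ℂ))) r‖ =
      ((1 + r) ^ α - (1 - r ^ 2) ^ α) / (α * r) := by
  obtain ⟨hr0, hr1⟩ := hr
  have h1r : 0 < 1 - r := by linarith
  have hle : (1 - r) ^ α ≤ 1 := Real.rpow_le_one h1r.le (by linarith) hα.le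
  have hpow : 0 < (1 - r) ^ α := Real.rpow_pos_of_pos h1r α
  have hval : 0 ≤ ((1 - r) ^ (-α) - 1) / (α * r) := by
    rw [Real.rpow_neg h1r.le]
    exact div_nonneg (sub_nonneg.2 ((one_le_inv₀ hpow).2 hle)) (by positivity)
  rw [cesaro_one_sub_cpow_neg_ofReal hα.ne' hr0.ne' hr1]
  simp only [Complex.norm_real, Real.norm_of_nonneg hval, Real.norm_of_nonneg hr0.le]
  rw [show 1 - r ^ 2 = (1 + r) * (1 - r) by ring,
    Real.mul_rpow (by linarith) h1r.le, Real.rpow_neg h1r.le]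
  field_simp

lemma tendsto_weighted_norm_cesaro_one_sub_cpow_neg (hα : 0 < α) :
    Tendsto (fun r : ℝ => ((1 + r) ^ α - (1 - r ^ 2) ^ α) / (α * r)) (𝓝[<] 1)
      (𝓝 (2 ^ α / α)) := by
  have hcont : ContinuousAt (fun r : ℝ => ((1 + r) ^ α - (1 - r ^ 2) ^ α) / (α * r)) 1 :=
    ((continuousAt_const.add continuousAt_id).rpow_const (Or.inr hα.le)).sub
      ((continuousAt_const.sub (continuousAt_id.pow 2)).rpow_const (Or.inr hα.le)) |>.div
      (continuousAt_const.mul continuousAt_id) (by simp [hα.ne'])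
  convert hcont.tendsto.mono_left nhdsWithin_le_nhds using 2
  norm_num [Real.zero_rpow hα.ne']

end TestFunction

lemma one_div_le_of_korenblumNorm_cesaro_one_sub_cpow_neg_le {α c : ℝ} (hα : 0 < α)
    (hbdd : BddAbove {y : ℝ | ∃ z : ℂ, ‖z‖ < 1 ∧
      y = (1 - ‖z‖ ^ 2) ^ α * ‖cesaro (fun w : ℂ => (1 - w) ^ (-(α : ℂ))) z‖})
    (hc : korenblumNorm α (cesaro fun w : ℂ => (1 - w) ^ (-(α : ℂ))) ≤
      c * korenblumNorm α (fun w : ℂ => (1 - w) ^ (-(α : ℂ))))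
    (hnorm : korenblumNorm α (fun w : ℂ => (1 - w) ^ (-(α : ℂ))) ≤ 2 ^ α) :
    1 / α ≤ c := by
  have hvalues : ∀ r ∈ Ioo (0 : ℝ) 1, ((1 + r) ^ α - (1 - r ^ 2) ^ α) / (α * r) ≤
      c * korenblumNorm α (fun w : ℂ => (1 - w) ^ (-(α : ℂ))) := fun r hr => by
    rw [← weighted_norm_cesaro_one_sub_cpow_neg hα hr]
    refine (le_korenblumNorm hbdd ?_).trans hc
    rw [Complex.norm_real, Real.norm_of_nonneg hr.1.le]
    exact hr.2
  have hlimit : 2 ^ α / α ≤ c * korenblumNorm α (fun w : ℂ => (1 - w) ^ (-(α : ℂ))) :=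
    le_of_tendsto (tendsto_weighted_norm_cesaro_one_sub_cpow_neg hα)
      (eventually_of_mem (Ioo_mem_nhdsLT one_pos) hvalues)
  have hc0 : 0 < c := pos_of_mul_pos_left ((by positivity : (0 : ℝ) < 2 ^ α / α).trans_le hlimit)
    korenblumNorm_nonneg
  have : 1 * 2 ^ α ≤ c * α * 2 ^ α := by
    rw [one_mul, mul_right_comm, ← div_le_iff₀ hα]
    exact hlimit.trans (by gcongr)
  rw [div_le_iff₀ hα]
  exact le_of_mul_le_mul_right this (by positivity)

theorem cesaro_stmt_9 (α : ℝ) (hα : 0 < α) (hα2 : α ≤ 1 / 2) :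
    (∀ f : ℂ → ℂ, DifferentiableOn ℂ f (Metric.ball 0 1) →
      BddAbove {y : ℝ | ∃ z : ℂ, ‖z‖ < 1 ∧ y = (1 - ‖z‖ ^ 2) ^ α * ‖f z‖} →
      BddAbove {y : ℝ | ∃ z : ℂ, ‖z‖ < 1 ∧ y = (1 - ‖z‖ ^ 2) ^ α * ‖cesaro f z‖} ∧
      korenblumNorm α (cesaro f) ≤ (1 / α) * korenblumNorm α f) ∧
    (∀ c : ℝ, (∀ f : ℂ → ℂ, DifferentiableOn ℂ f (Metric.ball 0 1) →
        BddAbove {y : ℝ | ∃ z : ℂ, ‖z‖ < 1 ∧ y = (1 - ‖z‖ ^ 2) ^ α * ‖f z‖} →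
        korenblumNorm α (cesaro f) ≤ c * korenblumNorm α f) → 1 / α ≤ c) := by
  have bounded : ∀ f : ℂ → ℂ,
      BddAbove {y : ℝ | ∃ z : ℂ, ‖z‖ < 1 ∧ y = (1 - ‖z‖ ^ 2) ^ α * ‖f z‖} →
      BddAbove {y : ℝ | ∃ z : ℂ, ‖z‖ < 1 ∧ y = (1 - ‖z‖ ^ 2) ^ α * ‖cesaro f z‖} ∧
      korenblumNorm α (cesaro f) ≤ (1 / α) * korenblumNorm α f := fun f hf =>
    bddAbove_and_korenblumNorm_le fun _ hz =>
      weighted_norm_cesaro_le hα hα2 (fun _ hw => le_korenblumNorm hf hw) hz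
  refine ⟨fun f _ => bounded f, fun c hc => ?_⟩
  obtain ⟨hbdd, hnorm⟩ := bddAbove_and_korenblumNorm_le fun _ hz =>
    weighted_norm_one_sub_cpow_neg_le hα.le hz
  exact one_div_le_of_korenblumNorm_cesaro_one_sub_cpow_neg_le hα (bounded _ hbdd).1
    (hc _ (differentiableOn_one_sub_cpow _) hbdd) hnorm
end

section
/- For 0 < α < 1, the norm of the Cesàro operator from the logarithmically weighted Korenblum space H^∞_{α,log} to the Korenblum space H^∞_α is at least 1/(1/α + log 2). -/
/-- The logarithmically weighted Korenblum space `H^∞_{α,log}` norm. -/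
noncomputable def korenblumLogNorm (α : ℝ) (f : ℂ → ℂ) : ℝ :=
  sSup {y : ℝ | ∃ z : ℂ, ‖z‖ < 1 ∧
    y = (1 - ‖z‖ ^ 2) ^ α * Real.log (2 * Real.exp (1 / α) / (1 - ‖z‖ ^ 2)) * ‖f z‖}

/-!
Test the operator on `f = 1`. Since `v - v log v ≤ 1` for `v > 0`, applied to `v = (1 - |z|²)^α`,
the log-weighted norm of `1` is attained at `z = 0` and equals `1/α + log 2`, while `𝒞1(0) = 1`
gives `‖𝒞1‖_{H^∞_α} ≥ 1`. For the latter supremum to be a genuine one, `(1 - |z|²)^α |𝒞1(z)|`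
must be bounded; this follows from the kernel estimate
`(1 - t|z|)⁻¹ ≤ (1 - t)^(α-1) (1 - |z|)^(-α)`, integrable in `t` because `α > 0`.
-/

open MeasureTheory

lemma rpow_mul_log_two_mul_exp_one_div_div_le {α u : ℝ} (hα : 0 < α) (hu : 0 < u) (hu1 : u ≤ 1) :
    u ^ α * Real.log (2 * Real.exp (1 / α) / u) ≤ 1 / α + Real.log 2 := by
  set v := u ^ α
  have hv : 0 < v := Real.rpow_pos_of_pos hu α
  have hv1 : v ≤ 1 := Real.rpow_le_one hu.le hu1 hα.le
  have hlog : Real.log (2 * Real.exp (1 / α) / u) = Real.log 2 + (1 - Real.log v) / α := by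
    rw [Real.log_div (by positivity) hu.ne', Real.log_mul two_ne_zero (Real.exp_ne_zero _),
      Real.log_exp, Real.log_rpow hu]
    field_simp
    ring
  have hentropy : v * (1 - Real.log v) ≤ 1 := by
    have hlog_ge := Real.one_sub_inv_le_log_of_pos hv
    have hmul_inv : v * v⁻¹ = 1 := mul_inv_cancel₀ hv.ne'
    nlinarith
  have hlog2 : 0 ≤ Real.log 2 := Real.log_nonneg one_le_two
  calc v * Real.log (2 * Real.exp (1 / α) / u)
      = v * (1 - Real.log v) / α + v * Real.log 2 := by rw [hlog]; ring
    _ ≤ 1 / α + 1 * Real.log 2 := by gcongr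
    _ = 1 / α + Real.log 2 := by rw [one_mul]

lemma inv_one_sub_mul_le_rpow_mul_rpow {α t r : ℝ} (hα0 : 0 ≤ α) (hα1 : α ≤ 1)
    (ht0 : 0 ≤ t) (ht1 : t < 1) (hr0 : 0 ≤ r) (hr1 : r < 1) :
    (1 - t * r)⁻¹ ≤ (1 - t) ^ (α - 1) * (1 - r) ^ (-α) := by
  have htr : 0 < 1 - t * r := by nlinarith
  rw [show α - 1 = -(1 - α) by ring, Real.rpow_neg (by linarith), Real.rpow_neg (by linarith),
    ← mul_inv]
  refine inv_anti₀ (by positivity) ?_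
  calc (1 - t) ^ (1 - α) * (1 - r) ^ α
      ≤ (1 - t * r) ^ (1 - α) * (1 - t * r) ^ α := by
        gcongr <;> nlinarith
    _ = 1 - t * r := by rw [← Real.rpow_add htr, sub_add_cancel, Real.rpow_one]

lemma integral_one_sub_rpow {α : ℝ} (hα : 0 < α) :
    ∫ t in (0 : ℝ)..1, (1 - t) ^ (α - 1) = 1 / α := by
  rw [intervalIntegral.integral_comp_sub_left (fun s : ℝ => s ^ (α - 1)) 1, sub_self, sub_zero,
    integral_rpow (Or.inl (by linarith)), sub_add_cancel, Real.one_rpow, Real.zero_rpow hα.ne']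
  ring

lemma norm_cesaro_one_le {α : ℝ} (hα0 : 0 < α) (hα1 : α ≤ 1) {z : ℂ} (hz : ‖z‖ < 1) :
    ‖cesaro (fun _ => 1) z‖ ≤ (1 - ‖z‖) ^ (-α) / α := by
  have hint :
      IntervalIntegrable (fun t : ℝ => (1 - t) ^ (α - 1) * (1 - ‖z‖) ^ (-α)) volume 0 1 := by
    have h := (intervalIntegral.intervalIntegrable_rpow' (a := 0) (b := 1) (r := α - 1)
      (by linarith)).comp_sub_left 1
    rw [sub_self, sub_zero] at h
    exact h.symm.mul_const _
  calc ‖cesaro (fun _ => 1) z‖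
      ≤ ∫ t in (0 : ℝ)..1, (1 - t) ^ (α - 1) * (1 - ‖z‖) ^ (-α) := by
        refine intervalIntegral.norm_integral_le_of_norm_le zero_le_one ?_ hint
        filter_upwards [Measure.ae_ne volume 1] with t ht1 ⟨ht0, ht1'⟩
        have htz : ‖(t : ℂ) * z‖ = t * ‖z‖ := by
          rw [norm_mul, Complex.norm_real, Real.norm_of_nonneg ht0.le]
        have hden : 1 - t * ‖z‖ ≤ ‖1 - (t : ℂ) * z‖ := by
          have := norm_sub_norm_le (1 : ℂ) ((t : ℂ) * z)
          rw [norm_one, htz] at this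
          linarith
        have htr : 0 < 1 - t * ‖z‖ := by nlinarith [norm_nonneg z]
        rw [norm_div, norm_one, one_div]
        exact (inv_anti₀ htr hden).trans (inv_one_sub_mul_le_rpow_mul_rpow hα0.le hα1 ht0.le
          (lt_of_le_of_ne ht1' ht1) (norm_nonneg z) hz)
    _ = (1 - ‖z‖) ^ (-α) / α := by
        rw [intervalIntegral.integral_mul_const, integral_one_sub_rpow hα0]
        ring

lemma rpow_mul_norm_cesaro_one_le {α : ℝ} (hα0 : 0 < α) (hα1 : α ≤ 1) {z : ℂ} (hz : ‖z‖ < 1) :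
    (1 - ‖z‖ ^ 2) ^ α * ‖cesaro (fun _ => 1) z‖ ≤ 2 ^ α / α := by
  have hr : 0 < 1 - ‖z‖ := by linarith
  have hfactor : (1 - ‖z‖ ^ 2) ^ α * (1 - ‖z‖) ^ (-α) = (1 + ‖z‖) ^ α := by
    rw [show 1 - ‖z‖ ^ 2 = (1 + ‖z‖) * (1 - ‖z‖) by ring,
      Real.mul_rpow (by positivity) hr.le, mul_assoc, ← Real.rpow_add hr, add_neg_cancel,
      Real.rpow_zero, mul_one]
  calc (1 - ‖z‖ ^ 2) ^ α * ‖cesaro (fun _ => 1) z‖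
      ≤ (1 - ‖z‖ ^ 2) ^ α * ((1 - ‖z‖) ^ (-α) / α) := by
        gcongr
        · exact Real.rpow_nonneg (by nlinarith [norm_nonneg z]) α
        · exact norm_cesaro_one_le hα0 hα1 hz
    _ = (1 + ‖z‖) ^ α / α := by rw [← hfactor]; ring
    _ ≤ 2 ^ α / α := by gcongr; linarith

lemma isGreatest_log_weight_one {α : ℝ} (hα : 0 < α) :
    IsGreatest {y : ℝ | ∃ z : ℂ, ‖z‖ < 1 ∧
      y = (1 - ‖z‖ ^ 2) ^ α * Real.log (2 * Real.exp (1 / α) / (1 - ‖z‖ ^ 2)) * ‖(1 : ℂ)‖}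
      (1 / α + Real.log 2) := by
  refine ⟨⟨0, by simp, ?_⟩, ?_⟩
  · rw [norm_zero, sq, zero_mul, sub_zero, Real.one_rpow, div_one,
      Real.log_mul two_ne_zero (Real.exp_ne_zero _), Real.log_exp, norm_one]
    ring
  · rintro y ⟨z, hz, rfl⟩
    rw [norm_one, mul_one]
    exact rpow_mul_log_two_mul_exp_one_div_div_le hα (by nlinarith [norm_nonneg z])
      (by nlinarith [norm_nonneg z])

lemma korenblumLogNorm_one {α : ℝ} (hα : 0 < α) :
    korenblumLogNorm α (fun _ => 1) = 1 / α + Real.log 2 :=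
  (isGreatest_log_weight_one hα).csSup_eq

lemma one_le_korenblumNorm_cesaro_one {α : ℝ} (hα0 : 0 < α) (hα1 : α ≤ 1) :
    1 ≤ korenblumNorm α (cesaro fun _ => 1) := by
  refine le_csSup ⟨2 ^ α / α, ?_⟩ ⟨0, by simp, ?_⟩
  · rintro y ⟨z, hz, rfl⟩
    exact rpow_mul_norm_cesaro_one_le hα0 hα1 hz
  · simp [cesaro]

theorem cesaro_stmt_11 (α : ℝ) (hα : 0 < α) (hα1 : α < 1) :
    ∀ c : ℝ, (∀ f : ℂ → ℂ, DifferentiableOn ℂ f (Metric.ball 0 1) →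
      BddAbove {y : ℝ | ∃ z : ℂ, ‖z‖ < 1 ∧
        y = (1 - ‖z‖ ^ 2) ^ α * Real.log (2 * Real.exp (1 / α) / (1 - ‖z‖ ^ 2)) * ‖f z‖} →
      korenblumNorm α (cesaro f) ≤ c * korenblumLogNorm α f) →
    1 / (1 / α + Real.log 2) ≤ c := by
  intro c hc
  have hbound := hc (fun _ => 1) (differentiableOn_const 1) (isGreatest_log_weight_one hα).bddAbove
  rw [korenblumLogNorm_one hα] at hbound
  rw [div_le_iff₀ (by positivity)]
  exact (one_le_korenblumNorm_cesaro_one hα hα1.le).trans hbound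
end

section
/- For 0 < α < 1, the norm of the Cesàro operator 𝒞 acting on the logarithmically weighted Korenblum space H^∞_{α,log} is at least 1/α. -/
/-!
The operator is tested on the dilations `f(z) = f_α(r z)`, `r < 1`, of the extremal function.
Since `|1 - z²| ≥ 1 - |z|²` and the radial weight is increasing, `f` has norm exactly `1`, attained
at the origin; being bounded, `f` has a Cesàro transform that lies in the space. At a real point
`x`, the integrand of `𝒞f(x)` is at least a constant times `(1 - r x t)^(-α-1)`, which integrates
explicitly; for `r = x (2 - x)` the resulting lower bound for the weighted value of `𝒞f` at `x`
tends to `1/α` as `x → 1`.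
-/

open Real Set Filter Topology

noncomputable def logWeight (α s : ℝ) : ℝ := s ^ α * log (2 * exp (1 / α) / s)

section logWeight

variable {α s : ℝ}

lemma log_two_mul_exp_div (hs : 0 < s) :
    log (2 * exp (1 / α) / s) = 1 / α + log (2 / s) := by
  rw [mul_comm, mul_div_assoc, log_mul (exp_ne_zero _) (by positivity), log_exp]

lemma one_div_le_log_two_mul_exp_div (hs : 0 < s) (hs2 : s ≤ 2) :
    1 / α ≤ log (2 * exp (1 / α) / s) := by
  rw [log_two_mul_exp_div hs, le_add_iff_nonneg_right]
  exact log_nonneg ((one_le_div hs).2 hs2)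

lemma logWeight_pos (hα : 0 < α) (hs : 0 < s) (hs2 : s ≤ 2) : 0 < logWeight α s :=
  mul_pos (rpow_pos_of_pos hs α)
    ((one_div_pos.2 hα).trans_le (one_div_le_log_two_mul_exp_div hs hs2))

/-- Writing `t = u s`, monotonicity reduces to `log u ≤ (u ^ α - 1) / α`. -/
lemma monotoneOn_logWeight (hα : 0 < α) : MonotoneOn (logWeight α) (Ioc 0 2) := by
  rintro s ⟨hs, -⟩ t ⟨ht, ht2⟩ hst
  set L := log (2 * exp (1 / α) / s)
  set u := t / s
  have hu : 1 ≤ u := (one_le_div hs).2 hst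
  have htu : t = s * u := (mul_div_cancel₀ t hs.ne').symm
  have hL : 1 / α + log u ≤ L := by
    rw [show L = _ from log_two_mul_exp_div hs]
    gcongr
    exact div_le_div_of_nonneg_right ht2 hs.le
  have hLt : log (2 * exp (1 / α) / t) = L - log u := by
    rw [htu, ← div_div, log_div (by positivity) (by positivity)]
  have hlog : log u ≤ (u ^ α - 1) / α := by
    rw [le_div_iff₀ hα, mul_comm, ← log_rpow (by positivity)]
    exact log_le_sub_one_of_pos (by positivity)
  have hua : 1 ≤ u ^ α := one_le_rpow hu hα.le
  unfold logWeight
  rw [hLt, htu, mul_rpow hs.le (by positivity), mul_assoc]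
  refine mul_le_mul_of_nonneg_left ?_ (by positivity)
  have := mul_nonneg (sub_nonneg.2 hua) (sub_nonneg.2 hL)
  rw [div_eq_mul_one_div] at hlog
  nlinarith

lemma logWeight_le_rpow (hα : 0 < α) (hs : 0 < s) :
    logWeight α s ≤ 2 / α * (2 * exp (1 / α)) ^ (α / 2) * s ^ (α / 2) := by
  have h := log_le_rpow_div (x := 2 * exp (1 / α) / s) (by positivity) (half_pos hα)
  rw [div_rpow (by positivity) hs.le] at h
  have hsplit : s ^ α = s ^ (α / 2) * s ^ (α / 2) := by
    rw [← rpow_add hs, add_halves]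
  have hpos : 0 < s ^ (α / 2) := rpow_pos_of_pos hs _
  calc logWeight α s
      ≤ s ^ α * ((2 * exp (1 / α)) ^ (α / 2) / s ^ (α / 2) / (α / 2)) := by
        unfold logWeight; gcongr
    _ = _ := by rw [hsplit]; field_simp

lemma continuousOn_logWeight : ContinuousOn (logWeight α) (Ioi 0) := by
  intro s hs
  have hs : 0 < s := hs
  unfold logWeight
  exact ContinuousAt.continuousWithinAt
    (by fun_prop (disch := first | positivity | left; positivity))

end logWeight

/-- On the unit disk, `holWeight α z = (1 - z²)^α log(2e^{1/α}/(1 - z²))`: the holomorphic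
function whose reciprocal is the paper's extremal function `f_α`. -/
noncomputable def holWeight (α : ℝ) (z : ℂ) : ℂ :=
  (1 - z ^ 2) ^ (α : ℂ) * (log (2 * exp (1 / α)) - Complex.log (1 - z ^ 2))

section holWeight

variable {α : ℝ} {z : ℂ}

lemma one_sub_norm_sq_le_re (z : ℂ) : 1 - ‖z‖ ^ 2 ≤ (1 - z ^ 2).re := by
  have := Complex.re_le_norm (z ^ 2)
  rw [norm_pow] at this
  simp only [Complex.sub_re, Complex.one_re]
  linarith

lemma one_sub_sq_mem_slitPlane (hz : ‖z‖ < 1) : 1 - z ^ 2 ∈ Complex.slitPlane := by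
  rw [sub_eq_add_neg]
  exact Complex.mem_slitPlane_of_norm_lt_one
    (by rwa [norm_neg, norm_pow, sq_lt_one_iff₀ (norm_nonneg z)])

lemma norm_one_sub_sq_le_two (hz : ‖z‖ < 1) : ‖1 - z ^ 2‖ ≤ 2 := by
  calc ‖1 - z ^ 2‖ ≤ ‖(1 : ℂ)‖ + ‖z ^ 2‖ := norm_sub_le _ _
    _ ≤ 2 := by rw [norm_one, norm_pow]; nlinarith [norm_nonneg z]

lemma differentiableAt_holWeight (hz : ‖z‖ < 1) : DifferentiableAt ℂ (holWeight α) z := by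
  have h := one_sub_sq_mem_slitPlane hz
  unfold holWeight
  fun_prop (disch := assumption)

/-- Uses `|log w| ≥ log |w|`, `|1 - z²| ≥ 1 - |z|²` and the monotonicity of `logWeight α`. -/
lemma logWeight_le_norm_holWeight (hα : 0 < α) {s : ℝ} (hs : 0 < s) (hsz : s ≤ 1 - ‖z‖ ^ 2) :
    logWeight α s ≤ ‖holWeight α z‖ := by
  have hz : ‖z‖ < 1 := by nlinarith [norm_nonneg z]
  have hw := hsz.trans ((one_sub_norm_sq_le_re z).trans (Complex.re_le_norm _))
  have hw2 := norm_one_sub_sq_le_two hz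
  have hw0 := hs.trans_le hw
  calc logWeight α s ≤ logWeight α ‖1 - z ^ 2‖ :=
        monotoneOn_logWeight hα ⟨hs, hw.trans hw2⟩ ⟨hw0, hw2⟩ hw
    _ = ‖(1 - z ^ 2) ^ (α : ℂ)‖ * (log (2 * exp (1 / α)) - Complex.log (1 - z ^ 2)).re := by
        rw [Complex.norm_cpow_real, logWeight, log_div (by positivity) hw0.ne']
        simp [Complex.log_re]
    _ ≤ ‖holWeight α z‖ := by
        rw [holWeight, norm_mul]
        gcongr
        exact Complex.re_le_norm _

lemma holWeight_ne_zero (hα : 0 < α) (hz : ‖z‖ < 1) : holWeight α z ≠ 0 := by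
  have hs : 0 < 1 - ‖z‖ ^ 2 := by nlinarith [norm_nonneg z]
  have h2 : 1 - ‖z‖ ^ 2 ≤ 2 := by nlinarith [norm_nonneg z]
  exact norm_pos_iff.1
    ((logWeight_pos hα hs h2).trans_le (logWeight_le_norm_holWeight hα hs le_rfl))

lemma holWeight_ofReal {s : ℝ} (hs : s ^ 2 < 1) : holWeight α s = logWeight α (1 - s ^ 2) := by
  have h : 0 < 1 - s ^ 2 := by linarith
  have e : (1 : ℂ) - (s : ℂ) ^ 2 = ((1 - s ^ 2 : ℝ) : ℂ) := by push_cast; ring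
  rw [holWeight, e, ← Complex.ofReal_cpow h.le, ← Complex.ofReal_log h.le, logWeight,
    log_div (by positivity) h.ne']
  push_cast
  ring

end holWeight

section integrals

variable {a : ℝ}

lemma integral_one_sub_mul_rpow (ha0 : a ≠ 0) (ha1 : a < 1) {q : ℝ} (hq : q ≠ 0) :
    ∫ t in (0 : ℝ)..1, (1 - a * t) ^ (q - 1) = (1 - (1 - a) ^ q) / (q * a) := by
  have h0 : (0 : ℝ) ∉ uIcc (1 - a) 1 := by
    rw [mem_uIcc]
    rintro (⟨h, -⟩ | ⟨h, -⟩) <;> linarith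
  rw [intervalIntegral.integral_comp_sub_mul (fun x => x ^ (q - 1)) ha0,
    integral_rpow (Or.inr ⟨by contrapose! hq; linarith, by simpa using h0⟩)]
  simp only [mul_one, mul_zero, sub_zero, sub_add_cancel, one_rpow, smul_eq_mul]
  field_simp

lemma one_sub_mul_pos (ha0 : 0 ≤ a) (ha1 : a < 1) {t : ℝ} (ht : t ∈ Icc (0 : ℝ) 1) :
    0 < 1 - a * t := by
  nlinarith [mul_le_mul_of_nonneg_left ht.2 ha0]

lemma intervalIntegrable_one_sub_mul_rpow (ha0 : 0 ≤ a) (ha1 : a < 1) (q : ℝ) :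
    IntervalIntegrable (fun t => (1 - a * t) ^ q) MeasureTheory.volume 0 1 := by
  refine ContinuousOn.intervalIntegrable fun t ht => ?_
  rw [uIcc_of_le zero_le_one] at ht
  have := one_sub_mul_pos ha0 ha1 ht
  exact ContinuousAt.continuousWithinAt (by fun_prop (disch := left; positivity))

lemma integral_one_sub_mul_rpow_le (ha0 : 0 ≤ a) (ha1 : a < 1) {γ : ℝ} (hγ0 : 0 < γ)
    (hγ1 : γ ≤ 1) : ∫ t in (0 : ℝ)..1, (1 - a * t) ^ (γ - 1) ≤ 1 / γ := by
  rcases ha0.eq_or_lt with rfl | ha0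
  · simpa using one_le_one_div hγ0 hγ1
  rw [integral_one_sub_mul_rpow ha0.ne' ha1 hγ0.ne', div_le_div_iff₀ (by positivity) hγ0]
  have : 1 - a ≤ (1 - a) ^ γ := by
    simpa using rpow_le_rpow_of_exponent_ge (x := 1 - a) (by linarith) (by linarith) hγ1
  nlinarith

end integrals

lemma norm_cesaro_le_of_norm_le {f : ℂ → ℂ} {M γ : ℝ} (hf : ∀ w : ℂ, ‖w‖ < 1 → ‖f w‖ ≤ M)
    (hγ0 : 0 < γ) (hγ1 : γ ≤ 1) {z : ℂ} (hz : ‖z‖ < 1) :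
    ‖cesaro f z‖ ≤ M / γ * (1 - ‖z‖) ^ (-γ) := by
  set a := ‖z‖
  have ha0 : 0 ≤ a := norm_nonneg z
  have hM : 0 ≤ M := (norm_nonneg _).trans (hf 0 (by simp))
  -- `1 / (1 - a t) ≤ (1 - a)^(-γ) (1 - a t)^(γ - 1)` trades the logarithmic growth of
  -- `∫₀¹ dt / (1 - a t)` for an integrable power.
  have hpt : ∀ t ∈ Icc (0 : ℝ) 1,
      ‖f (t * z) / (1 - t * z)‖ ≤ M * (1 - a) ^ (-γ) * (1 - a * t) ^ (γ - 1) := by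
    intro t ht
    have htz : ‖(t : ℂ) * z‖ = a * t := by rw [norm_mul, Complex.norm_of_nonneg ht.1, mul_comm]
    have hat := one_sub_mul_pos ha0 hz ht
    have hden : 1 - a * t ≤ ‖1 - t * z‖ := by
      have := norm_sub_norm_le (1 : ℂ) (t * z)
      rwa [norm_one, htz] at this
    have hinv : (1 - a * t)⁻¹ ≤ (1 - a) ^ (-γ) * (1 - a * t) ^ (γ - 1) := by
      have : (1 - a) ^ γ ≤ (1 - a * t) ^ γ := by
        gcongr
        nlinarith [mul_le_mul_of_nonneg_left ht.2 ha0]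
      rw [rpow_neg (by linarith), rpow_sub_one hat.ne',
        show ((1 - a) ^ γ)⁻¹ * ((1 - a * t) ^ γ / (1 - a * t))
          = (1 - a * t) ^ γ / (1 - a) ^ γ * (1 - a * t)⁻¹ by ring]
      exact le_mul_of_one_le_left (inv_nonneg.2 hat.le) ((one_le_div (by positivity)).2 this)
    rw [norm_div, div_eq_mul_inv, mul_assoc]
    exact mul_le_mul (hf _ (by rw [htz]; linarith)) (hinv.trans' (inv_anti₀ hat hden))
      (inv_nonneg.2 (norm_nonneg _)) hM
  calc ‖cesaro f z‖
      ≤ ∫ t in (0 : ℝ)..1, M * (1 - a) ^ (-γ) * (1 - a * t) ^ (γ - 1) :=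
        intervalIntegral.norm_integral_le_of_norm_le zero_le_one
          (MeasureTheory.ae_of_all _ fun t ht => hpt t (Ioc_subset_Icc_self ht))
          ((intervalIntegrable_one_sub_mul_rpow ha0 hz _).const_mul _)
    _ = M * (1 - a) ^ (-γ) * ∫ t in (0 : ℝ)..1, (1 - a * t) ^ (γ - 1) :=
        intervalIntegral.integral_const_mul _ _
    _ ≤ M * (1 - a) ^ (-γ) * (1 / γ) := by
        gcongr
        exact integral_one_sub_mul_rpow_le ha0 hz hγ0 hγ1
    _ = M / γ * (1 - a) ^ (-γ) := by ring

/-- `korenblumLogNorm α f` is the supremum of this set, a junk value unless the set is bounded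
above: hence the test functions below are dilated. -/
def weightedValues (α : ℝ) (f : ℂ → ℂ) : Set ℝ :=
  {y | ∃ z : ℂ, ‖z‖ < 1 ∧ y = logWeight α (1 - ‖z‖ ^ 2) * ‖f z‖}

section weightedValues

variable {α : ℝ} {f : ℂ → ℂ}

lemma le_korenblumLogNorm (hf : BddAbove (weightedValues α f)) {z : ℂ} (hz : ‖z‖ < 1) :
    logWeight α (1 - ‖z‖ ^ 2) * ‖f z‖ ≤ korenblumLogNorm α f :=
  le_csSup hf ⟨z, hz, rfl⟩

lemma korenblumLogNorm_eq_of_isGreatest {M : ℝ} (h : IsGreatest (weightedValues α f) M) :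
    korenblumLogNorm α f = M :=
  h.csSup_eq

/-- The Cesàro transform of a bounded function grows at most like `(1 - |z|)^(-α/2)`, which the
weight `(1 - |z|²)^α log(…)` absorbs. -/
lemma bddAbove_weightedValues_cesaro (hα : 0 < α) (hα2 : α ≤ 2) {M : ℝ}
    (hf : ∀ w : ℂ, ‖w‖ < 1 → ‖f w‖ ≤ M) : BddAbove (weightedValues α (cesaro f)) := by
  set K := 2 / α * (2 * exp (1 / α)) ^ (α / 2) * 2 ^ (α / 2)
  refine ⟨K * (M / (α / 2)), ?_⟩
  rintro _ ⟨z, hz, rfl⟩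
  set a := ‖z‖
  have h1a : 0 < 1 - a := by linarith
  have hw : logWeight α (1 - a ^ 2) ≤ K * (1 - a) ^ (α / 2) := by
    calc logWeight α (1 - a ^ 2)
        ≤ 2 / α * (2 * exp (1 / α)) ^ (α / 2) * (1 - a ^ 2) ^ (α / 2) :=
          logWeight_le_rpow hα (by nlinarith [norm_nonneg z])
      _ ≤ 2 / α * (2 * exp (1 / α)) ^ (α / 2) * (2 * (1 - a)) ^ (α / 2) := by
          gcongr <;> nlinarith [norm_nonneg z]
      _ = K * (1 - a) ^ (α / 2) := by rw [mul_rpow zero_le_two h1a.le]; ring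
  have hc := norm_cesaro_le_of_norm_le hf (half_pos hα) (by linarith) hz
  have hM : 0 ≤ M := (norm_nonneg _).trans (hf 0 (by simp))
  calc logWeight α (1 - a ^ 2) * ‖cesaro f z‖
      ≤ K * (1 - a) ^ (α / 2) * (M / (α / 2) * (1 - a) ^ (-(α / 2))) :=
        mul_le_mul hw hc (norm_nonneg _) (by positivity)
    _ = K * (M / (α / 2)) := by
        rw [rpow_neg h1a.le]
        field_simp

end weightedValues

/-- The paper's extremal function `f_α`, dilated by `r < 1` so that it is bounded on the disk. -/
noncomputable def dilatedExtremal (α r : ℝ) (w : ℂ) : ℂ := (holWeight α (r * w))⁻¹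

section dilatedExtremal

variable {α r : ℝ}

lemma norm_ofReal_mul_le (hr0 : 0 ≤ r) (hr1 : r ≤ 1) (w : ℂ) : ‖(r : ℂ) * w‖ ≤ ‖w‖ := by
  rw [norm_mul, Complex.norm_of_nonneg hr0]
  exact mul_le_of_le_one_left (norm_nonneg w) hr1

lemma differentiableOn_dilatedExtremal (hα : 0 < α) (hr0 : 0 ≤ r) (hr1 : r ≤ 1) :
    DifferentiableOn ℂ (dilatedExtremal α r) (Metric.ball 0 1) := by
  intro w hw
  rw [mem_ball_zero_iff] at hw
  have hrw : ‖(r : ℂ) * w‖ < 1 := (norm_ofReal_mul_le hr0 hr1 w).trans_lt hw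
  exact (((differentiableAt_holWeight hrw).comp w (by fun_prop)).inv
    (holWeight_ne_zero hα hrw)).differentiableWithinAt

lemma norm_dilatedExtremal_le (hα : 0 < α) (hr0 : 0 ≤ r) (hr1 : r < 1) {w : ℂ} (hw : ‖w‖ < 1) :
    ‖dilatedExtremal α r w‖ ≤ (logWeight α (1 - r ^ 2))⁻¹ := by
  have hrw : ‖(r : ℂ) * w‖ ≤ r := by
    rw [norm_mul, Complex.norm_of_nonneg hr0]
    exact mul_le_of_le_one_right hr0 hw.le
  have hs : 0 < 1 - r ^ 2 := by nlinarith
  rw [dilatedExtremal, norm_inv]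
  refine inv_anti₀ (logWeight_pos hα hs (by nlinarith)) (logWeight_le_norm_holWeight hα hs ?_)
  nlinarith [norm_nonneg ((r : ℂ) * w)]

lemma isGreatest_weightedValues_dilatedExtremal (hα : 0 < α) (hr0 : 0 ≤ r) (hr1 : r ≤ 1) :
    IsGreatest (weightedValues α (dilatedExtremal α r)) 1 := by
  have h1 : 0 < logWeight α 1 := logWeight_pos hα one_pos one_le_two
  refine ⟨⟨0, by simp, ?_⟩, ?_⟩
  · have h0 : holWeight α 0 = logWeight α 1 := by
      simpa using holWeight_ofReal (α := α) (s := 0) (by norm_num)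
    rw [dilatedExtremal, mul_zero, h0, norm_inv, Complex.norm_of_nonneg h1.le, norm_zero]
    norm_num [h1.ne']
  · rintro _ ⟨z, hz, rfl⟩
    have hs : 0 < 1 - ‖z‖ ^ 2 := by nlinarith [norm_nonneg z]
    have hrz := norm_ofReal_mul_le hr0 hr1 z
    have hle : logWeight α (1 - ‖z‖ ^ 2) ≤ ‖holWeight α (r * z)‖ :=
      logWeight_le_norm_holWeight hα hs (by nlinarith [norm_nonneg ((r : ℂ) * z)])
    rw [dilatedExtremal, norm_inv, ← div_eq_mul_inv]
    exact div_le_one_of_le₀ hle (norm_nonneg _)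

end dilatedExtremal

section lowerBound

variable {α : ℝ}

lemma cesaro_dilatedExtremal_ofReal {r x : ℝ} (hr0 : 0 ≤ r) (hr1 : r ≤ 1) (hx0 : 0 ≤ x)
    (hx1 : x < 1) :
    cesaro (dilatedExtremal α r) x =
      ↑(∫ t in (0 : ℝ)..1, (logWeight α (1 - (r * x * t) ^ 2))⁻¹ / (1 - x * t)) := by
  rw [cesaro, ← intervalIntegral.integral_ofReal]
  refine intervalIntegral.integral_congr fun t ht => ?_
  rw [uIcc_of_le zero_le_one] at ht
  have hrxt : r * x * t < 1 :=
    (mul_le_of_le_one_right (by positivity) ht.2).trans_lt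
      ((mul_le_of_le_one_left hx0 hr1).trans_lt hx1)
  have hs : (r * x * t) ^ 2 < 1 := by nlinarith [mul_nonneg (mul_nonneg hr0 hx0) ht.1]
  have e : (r : ℂ) * (t * x) = ((r * x * t : ℝ) : ℂ) := by push_cast; ring
  simp only [dilatedExtremal, e, holWeight_ofReal hs]
  push_cast
  ring

lemma logWeight_one_sub_sq_le (hα : 0 < α) {u ρ : ℝ} (hu0 : 0 ≤ u) (huρ : u ≤ ρ) (hρ1 : ρ < 1) :
    logWeight α (1 - u ^ 2) ≤ 2 ^ α * (1 - u) ^ α * log (2 * exp (1 / α) / (1 - ρ ^ 2)) := by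
  have hu : 0 < 1 - u ^ 2 := by nlinarith
  have hlog : 0 ≤ log (2 * exp (1 / α) / (1 - u ^ 2)) :=
    (one_div_pos.2 hα).le.trans (one_div_le_log_two_mul_exp_div hu (by nlinarith))
  calc logWeight α (1 - u ^ 2)
      ≤ (2 * (1 - u)) ^ α * log (2 * exp (1 / α) / (1 - ρ ^ 2)) :=
        mul_le_mul (rpow_le_rpow hu.le (by nlinarith) hα.le)
          (log_le_log (by positivity)
            (div_le_div_of_nonneg_left (by positivity) (by nlinarith) (by nlinarith)))
          hlog (rpow_nonneg (by linarith) _)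
    _ = _ := by rw [mul_rpow zero_le_two (by linarith)]

variable {ρ x : ℝ}

lemma le_inv_logWeight_div (hα : 0 < α) (hρ0 : 0 < ρ) (hρx : ρ ≤ x) (hx1 : x < 1) {t : ℝ}
    (ht : t ∈ Icc (0 : ℝ) 1) :
    (2 ^ α * log (2 * exp (1 / α) / (1 - ρ ^ 2)))⁻¹ * (1 - ρ * t) ^ (-α - 1) ≤
      (logWeight α (1 - (ρ * t) ^ 2))⁻¹ / (1 - x * t) := by
  have hρt := one_sub_mul_pos hρ0.le (hρx.trans_lt hx1) ht
  have hxt := one_sub_mul_pos (hρ0.le.trans hρx) hx1 ht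
  have hs : 0 < 1 - (ρ * t) ^ 2 := by nlinarith [mul_nonneg hρ0.le ht.1]
  have hw := logWeight_one_sub_sq_le hα (mul_nonneg hρ0.le ht.1)
    (mul_le_of_le_one_right hρ0.le ht.2) (hρx.trans_lt hx1)
  have hL : 0 < log (2 * exp (1 / α) / (1 - ρ ^ 2)) :=
    (one_div_pos.2 hα).trans_le (one_div_le_log_two_mul_exp_div (by nlinarith) (by nlinarith))
  calc (2 ^ α * log (2 * exp (1 / α) / (1 - ρ ^ 2)))⁻¹ * (1 - ρ * t) ^ (-α - 1)
      = (2 ^ α * (1 - ρ * t) ^ α * log (2 * exp (1 / α) / (1 - ρ ^ 2)) * (1 - ρ * t))⁻¹ := by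
        rw [rpow_sub_one hρt.ne', rpow_neg hρt.le]
        field_simp
    _ ≤ (logWeight α (1 - (ρ * t) ^ 2) * (1 - x * t))⁻¹ := by
        refine inv_anti₀ (mul_pos (logWeight_pos hα hs (by nlinarith)) hxt) ?_
        exact mul_le_mul hw (by nlinarith [ht.1]) hxt.le (by positivity)
    _ = _ := by rw [mul_inv, div_eq_mul_inv]

lemma intervalIntegrable_inv_logWeight_div (hα : 0 < α) (hρ0 : 0 ≤ ρ) (hρ1 : ρ < 1)
    (hx0 : 0 ≤ x) (hx1 : x < 1) :
    IntervalIntegrable (fun t => (logWeight α (1 - (ρ * t) ^ 2))⁻¹ / (1 - x * t))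
      MeasureTheory.volume 0 1 := by
  refine ContinuousOn.intervalIntegrable fun t ht => ?_
  rw [uIcc_of_le zero_le_one] at ht
  have hρt := one_sub_mul_pos hρ0 hρ1 ht
  have hxt := one_sub_mul_pos hx0 hx1 ht
  have hs : 0 < 1 - (ρ * t) ^ 2 := by nlinarith [mul_nonneg hρ0 ht.1]
  refine ContinuousAt.continuousWithinAt (ContinuousAt.div (ContinuousAt.inv₀ ?_ ?_)
    (by fun_prop) hxt.ne')
  · exact (continuousOn_logWeight.continuousAt (Ioi_mem_nhds hs)).comp
      (f := fun t => 1 - (ρ * t) ^ 2) (by fun_prop)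
  · exact (logWeight_pos hα hs (by nlinarith)).ne'

lemma le_logWeight_mul_norm_cesaro_dilatedExtremal (hα : 0 < α) {r : ℝ} (hr0 : 0 < r)
    (hr1 : r ≤ 1) (hx0 : 0 < x) (hx1 : x < 1) :
    (1 - x ^ 2) ^ α * ((1 - r * x) ^ (-α) - 1) / (2 ^ α * α * (r * x)) ≤
      logWeight α (1 - x ^ 2) * ‖cesaro (dilatedExtremal α r) x‖ := by
  rw [cesaro_dilatedExtremal_ofReal hr0.le hr1 hx0.le hx1]
  set ρ := r * x
  have hρ0 : 0 < ρ := by positivity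
  have hρx : ρ ≤ x := mul_le_of_le_one_left hx0.le hr1
  have hρ1 : ρ < 1 := hρx.trans_lt hx1
  set L := log (2 * exp (1 / α) / (1 - ρ ^ 2))
  have hL : 0 < L :=
    (one_div_pos.2 hα).trans_le (one_div_le_log_two_mul_exp_div (by nlinarith) (by nlinarith))
  have hint : ∫ t in (0 : ℝ)..1, (2 ^ α * L)⁻¹ * (1 - ρ * t) ^ (-α - 1) =
      (2 ^ α * L)⁻¹ * (((1 - ρ) ^ (-α) - 1) / (α * ρ)) := by
    rw [intervalIntegral.integral_const_mul,
      integral_one_sub_mul_rpow hρ0.ne' hρ1 (neg_ne_zero.2 hα.ne')]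
    congr 1
    field_simp
    ring
  have hlow : (2 ^ α * L)⁻¹ * (((1 - ρ) ^ (-α) - 1) / (α * ρ)) ≤
      ‖((∫ t in (0 : ℝ)..1, (logWeight α (1 - (ρ * t) ^ 2))⁻¹ / (1 - x * t) : ℝ) : ℂ)‖ := by
    rw [Complex.norm_real, ← hint]
    exact (intervalIntegral.integral_mono_on zero_le_one
      ((intervalIntegrable_one_sub_mul_rpow hρ0.le hρ1 _).const_mul _)
      (intervalIntegrable_inv_logWeight_div hα hρ0.le hρ1 hx0.le hx1)
      fun t ht => le_inv_logWeight_div hα hρ0 hρx hx1 ht).trans (le_abs_self _)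
  have hLx : (1 - x ^ 2) ^ α * L ≤ logWeight α (1 - x ^ 2) := by
    refine mul_le_mul_of_nonneg_left (log_le_log (div_pos (by positivity) (by nlinarith)) ?_)
      (rpow_nonneg (by nlinarith) _)
    exact div_le_div_of_nonneg_left (by positivity) (by nlinarith) (by nlinarith)
  have hnum : 0 ≤ (1 - ρ) ^ (-α) - 1 :=
    sub_nonneg.2 (one_le_rpow_of_pos_of_le_one_of_nonpos (by linarith) (by linarith)
      (by linarith))
  calc (1 - x ^ 2) ^ α * ((1 - ρ) ^ (-α) - 1) / (2 ^ α * α * ρ)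
      = (1 - x ^ 2) ^ α * L * ((2 ^ α * L)⁻¹ * (((1 - ρ) ^ (-α) - 1) / (α * ρ))) := by
        field_simp
    _ ≤ _ := mul_le_mul hLx hlow (mul_nonneg (by positivity) (div_nonneg hnum (by positivity)))
        (hLx.trans' (mul_nonneg (rpow_nonneg (by nlinarith) _) hL.le))

end lowerBound

/-- The dilation `r = x (2 - x)` tends to `1` fast enough that `(1 - x²)^α (1 - r x)^(-α) → 2^α`. -/
lemma tendsto_cesaro_lowerBound {α : ℝ} (hα : 0 < α) :
    Tendsto (fun x : ℝ => (1 - x ^ 2) ^ α * ((1 - x * (2 - x) * x) ^ (-α) - 1) /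
      (2 ^ α * α * (x * (2 - x) * x))) (𝓝[<] 1) (𝓝 (1 / α)) := by
  set G := fun x : ℝ => (((1 + x) / (1 + x - x ^ 2)) ^ α - (1 - x ^ 2) ^ α) /
    (2 ^ α * α * (x * (2 - x) * x))
  have hG : ContinuousAt G 1 := by
    simp only [G]
    fun_prop (disch := first | exact Or.inr hα.le | norm_num [hα.ne'])
  have hG1 : G 1 = 1 / α := by
    norm_num [G, zero_rpow hα.ne']
    field_simp
  refine (hG1 ▸ hG.tendsto.mono_left nhdsWithin_le_nhds).congr' ?_
  filter_upwards [Ioo_mem_nhdsLT zero_lt_one] with x ⟨hx0, hx1⟩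
  have h1 : 0 < 1 - x := by linarith
  have hq : 0 < 1 + x - x ^ 2 := by nlinarith
  have hcancel : (1 - x) ^ α * (1 - x) ^ (-α) = 1 := by
    rw [← rpow_add h1, add_neg_cancel, rpow_zero]
  simp only [G]
  rw [show 1 - x * (2 - x) * x = (1 - x) * (1 + x - x ^ 2) by ring,
    show 1 - x ^ 2 = (1 - x) * (1 + x) by ring, mul_rpow h1.le hq.le, mul_rpow h1.le (by linarith),
    div_rpow (by linarith) hq.le, rpow_neg hq.le]
  congr 1
  linear_combination (-(1 + x) ^ α * ((1 + x - x ^ 2) ^ α)⁻¹) * hcancel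

theorem cesaro_stmt_12 (α : ℝ) (hα : 0 < α) (hα1 : α < 1) :
    ∀ c : ℝ, (∀ f : ℂ → ℂ, DifferentiableOn ℂ f (Metric.ball 0 1) →
      BddAbove {y : ℝ | ∃ z : ℂ, ‖z‖ < 1 ∧
        y = (1 - ‖z‖ ^ 2) ^ α * Real.log (2 * Real.exp (1 / α) / (1 - ‖z‖ ^ 2)) * ‖f z‖} →
      korenblumLogNorm α (cesaro f) ≤ c * korenblumLogNorm α f) →
    1 / α ≤ c := by
  intro c hc
  refine le_of_tendsto (tendsto_cesaro_lowerBound hα) ?_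
  filter_upwards [Ioo_mem_nhdsLT zero_lt_one] with x ⟨hx0, hx1⟩
  have hr0 : 0 < x * (2 - x) := by nlinarith
  have hr1 : x * (2 - x) ≤ 1 := by nlinarith
  set f := dilatedExtremal α (x * (2 - x))
  have hf := isGreatest_weightedValues_dilatedExtremal hα hr0.le hr1
  have hCf := hc f (differentiableOn_dilatedExtremal hα hr0.le hr1) ⟨1, hf.2⟩
  rw [korenblumLogNorm_eq_of_isGreatest hf, mul_one] at hCf
  have hx : ‖(x : ℂ)‖ < 1 := by rwa [Complex.norm_of_nonneg hx0.le]
  calc _ ≤ logWeight α (1 - x ^ 2) * ‖cesaro f x‖ :=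
        le_logWeight_mul_norm_cesaro_dilatedExtremal hα hr0 hr1 hx0 hx1
    _ ≤ korenblumLogNorm α (cesaro f) := by
        have hbdd := bddAbove_weightedValues_cesaro hα (by linarith)
          fun w hw => norm_dilatedExtremal_le hα hr0.le (by nlinarith) hw
        simpa [Complex.norm_of_nonneg hx0.le] using le_korenblumLogNorm hbdd hx
    _ ≤ c := hCf
end

section
/- The function h(r) = ((1-r²)/r²)·( 3r/(2(1-r)) - (1/4)·log((1+r)/(1-r)⁵) ), defined for 0 < r < 1, has the power series expansion h(r) = 1 + r + Σ_{n≥2} ( 5/(2n(n+2)) + (-1)^{n-1}/(2n(n+2)) ) rⁿ; in particular h is strictly increasing on (0,1) and lim_{r→1⁻} h(r) = 3. -/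
/-!
Expanding `-log (1 - x) = ∑ xᵏ / k` and splitting `1 / ((n + 2)(n + 4))` into partial fractions
sums `∑ xⁿ⁺² / ((n + 2)(n + 4))` in closed form. Since `(-1)ⁿ⁺¹ rⁿ⁺² = -(-r)ⁿ⁺²`, the claimed
series is `5/2` of that sum at `r` minus `1/2` of it at `-r`, which is `h r - 1 - r`.
Its coefficients are nonnegative, so `h` is strictly increasing. Near `r = 1` the factor `1 - r²`
cancels the pole of `3r / (2(1 - r))` and turns the logarithm into terms `(1 - r) log (1 - r)`,
which tend to `0`.
-/

open Real Filter Set Topology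

lemma hasSum_pow_div_nat_add {x : ℝ} (hx : |x| < 1) (k : ℕ) :
    HasSum (fun n : ℕ => x ^ (n + k + 1) / (n + k + 1 : ℕ))
      (-log (1 - x) - ∑ i ∈ Finset.range k, x ^ (i + 1) / (i + 1)) := by
  have := (hasSum_nat_add_iff' (f := fun n : ℕ => x ^ (n + 1) / (n + 1)) k).2
    (hasSum_pow_div_log_of_abs_lt_one hx)
  simpa only [Nat.cast_add, Nat.cast_one] using this

/-- The closed form of `∑ xⁿ⁺² / ((n + 2)(n + 4))` (for `0 < |x| < 1`). -/
noncomputable def partialFractionSum (x : ℝ) : ℝ :=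
  ((-log (1 - x) - x) - (-log (1 - x) - (x + x ^ 2 / 2 + x ^ 3 / 3)) / x ^ 2) / 2

lemma hasSum_pow_div_mul_add_two_add_four {x : ℝ} (hx : |x| < 1) (hx0 : x ≠ 0) :
    HasSum (fun n : ℕ => x ^ (n + 2) / ((n + 2) * (n + 4))) (partialFractionSum x) := by
  have h := ((hasSum_pow_div_nat_add hx 1).sub
    ((hasSum_pow_div_nat_add hx 3).div_const (x ^ 2))).div_const 2
  norm_num [Finset.sum_range_succ] at h
  refine h.congr_fun fun n => ?_
  field_simp
  ring

noncomputable def cesaroH (r : ℝ) : ℝ :=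
  (1 - r ^ 2) / r ^ 2 * (3 * r / (2 * (1 - r)) - 1 / 4 * log ((1 + r) / (1 - r) ^ 5))

noncomputable def cesaroCoeff (n : ℕ) : ℝ :=
  5 / (2 * ((n : ℝ) + 2) * ((n : ℝ) + 4)) +
    (-1 : ℝ) ^ (n + 1) / (2 * ((n : ℝ) + 2) * ((n : ℝ) + 4))

lemma cesaroCoeff_nonneg (n : ℕ) : 0 ≤ cesaroCoeff n := by
  rw [cesaroCoeff, ← add_div]
  rcases neg_one_pow_eq_or ℝ (n + 1) with h | h <;> rw [h] <;> positivity

lemma cesaroCoeff_mul_pow (n : ℕ) (r : ℝ) :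
    cesaroCoeff n * r ^ (n + 2) =
      5 / 2 * (r ^ (n + 2) / ((n + 2) * (n + 4))) -
        1 / 2 * ((-r) ^ (n + 2) / ((n + 2) * (n + 4))) := by
  have hn2 : (n : ℝ) + 2 ≠ 0 := by positivity
  have hn4 : (n : ℝ) + 4 ≠ 0 := by positivity
  rw [cesaroCoeff, neg_pow r, pow_succ]
  field_simp
  ring

lemma cesaroH_eq_partialFractionSum {r : ℝ} (h0 : 0 < r) (h1 : r < 1) :
    cesaroH r = 1 + r + (5 / 2 * partialFractionSum r - 1 / 2 * partialFractionSum (-r)) := by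
  have h1' : 1 - r ≠ 0 := by linarith
  rw [cesaroH, partialFractionSum, partialFractionSum, sub_neg_eq_add 1 r,
    log_div (by positivity) (pow_ne_zero 5 h1'), log_pow]
  field_simp
  ring

lemma hasSum_cesaroCoeff_mul_pow {r : ℝ} (h0 : 0 < r) (h1 : r < 1) :
    HasSum (fun n => cesaroCoeff n * r ^ (n + 2)) (cesaroH r - 1 - r) := by
  have hr : |r| < 1 := by rwa [abs_of_pos h0]
  have hr' : |-r| < 1 := by rwa [abs_neg]
  have h := ((hasSum_pow_div_mul_add_two_add_four hr h0.ne').mul_left (5 / 2)).sub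
    ((hasSum_pow_div_mul_add_two_add_four hr' (neg_ne_zero.2 h0.ne')).mul_left (1 / 2))
  have hval : cesaroH r - 1 - r =
      5 / 2 * partialFractionSum r - 1 / 2 * partialFractionSum (-r) := by
    rw [cesaroH_eq_partialFractionSum h0 h1]
    ring
  rw [hval]
  exact h.congr_fun fun n => cesaroCoeff_mul_pow n r

lemma strictMonoOn_cesaroH : StrictMonoOn cesaroH (Ioo 0 1) := by
  intro a ha b hb hab
  have hle : cesaroH a - 1 - a ≤ cesaroH b - 1 - b :=
    hasSum_le (fun n => mul_le_mul_of_nonneg_left (pow_le_pow_left₀ ha.1.le hab.le _)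
      (cesaroCoeff_nonneg n)) (hasSum_cesaroCoeff_mul_pow ha.1 ha.2)
      (hasSum_cesaroCoeff_mul_pow hb.1 hb.2)
  linarith

lemma cesaroH_eq_sub_mul_log {r : ℝ} (h0 : 0 < r) (h1 : r < 1) :
    cesaroH r = 3 * (1 + r) / (2 * r) -
      (1 + r) / (4 * r ^ 2) * ((1 - r) * log (1 + r) - 5 * ((1 - r) * log (1 - r))) := by
  have h1' : 1 - r ≠ 0 := by linarith
  rw [cesaroH, log_div (by positivity) (pow_ne_zero 5 h1'), log_pow]
  field_simp
  ring

lemma tendsto_cesaroH_nhdsLT_one : Tendsto cesaroH (𝓝[<] 1) (𝓝 3) := by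
  have hxlogx : ContinuousAt (fun r : ℝ => (1 - r) * log (1 - r)) 1 :=
    continuous_mul_log.continuousAt.comp (by fun_prop)
  have hcont : ContinuousAt (fun r : ℝ => 3 * (1 + r) / (2 * r) -
      (1 + r) / (4 * r ^ 2) * ((1 - r) * log (1 + r) - 5 * ((1 - r) * log (1 - r)))) 1 := by
    fun_prop (disch := norm_num)
  have hlim := hcont.tendsto.mono_left (nhdsWithin_le_nhds (s := Iio 1))
  norm_num at hlim
  refine hlim.congr' ?_
  filter_upwards [Ioo_mem_nhdsLT (by norm_num : (0 : ℝ) < 1)] with r hr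
  exact (cesaroH_eq_sub_mul_log hr.1 hr.2).symm

theorem cesaro_stmt_16 :
    (∀ r : ℝ, 0 < r → r < 1 →
      (1 - r ^ 2) / r ^ 2 *
          (3 * r / (2 * (1 - r)) - 1 / 4 * Real.log ((1 + r) / (1 - r) ^ 5)) =
        1 + r + ∑' n : ℕ,
          (5 / (2 * ((n : ℝ) + 2) * ((n : ℝ) + 4)) +
            (-1 : ℝ) ^ (n + 1) / (2 * ((n : ℝ) + 2) * ((n : ℝ) + 4))) * r ^ (n + 2)) ∧
    StrictMonoOn
      (fun r : ℝ => (1 - r ^ 2) / r ^ 2 *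
        (3 * r / (2 * (1 - r)) - 1 / 4 * Real.log ((1 + r) / (1 - r) ^ 5)))
      (Set.Ioo (0 : ℝ) 1) ∧
    Filter.Tendsto
      (fun r : ℝ => (1 - r ^ 2) / r ^ 2 *
        (3 * r / (2 * (1 - r)) - 1 / 4 * Real.log ((1 + r) / (1 - r) ^ 5)))
      (nhdsWithin 1 (Set.Iio 1)) (nhds 3) := by
  refine ⟨fun r h0 h1 => ?_, strictMonoOn_cesaroH, tendsto_cesaroH_nhdsLT_one⟩
  change cesaroH r = 1 + r + ∑' n, cesaroCoeff n * r ^ (n + 2)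
  rw [(hasSum_cesaroCoeff_mul_pow h0 h1).tsum_eq]
  ring
end
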